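/- arXiv:1610.08609 — 3 statements merged into one kernel-verified Lean document; each statement's English description precedes it below -/
import Mathlib

section
/- Let φ : closure(Q) → ℝ^{n+1} be continuous on the closed box Q = ∏_{i=0}^{n}[mᵢ, Mᵢ], satisfying for each i: φᵢ(x) > 0 when xᵢ = mᵢ and φᵢ(x) < 0 when xᵢ = Mᵢ. Then φ has a zero in the open box ∏(mᵢ, Mᵢ). -/
/-!
Discretise the box by a grid with `k` steps per side and triangulate it by Kuhn (Freudenthal)
simplices. Label a grid point `0` if `φ` is componentwise nonnegative there, and `i + 1` for some
`i` with `φ i < 0` otherwise. The sign conditions make this a Sperner labelling of the cube, so by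
Kuhn's cubical Sperner lemma some simplex carries all labels. That lemma is proved by induction on
the dimension with the rooms-and-doors parity argument: the doors of a simplex are its facets
carrying every label but the last one, and a simplex has an odd number of doors iff it is fully
labelled. The doors in the face `x_last = 0` are exactly the fully labelled simplices of that
face, the sign conditions rule out doors elsewhere on the boundary, and the remaining doors are
paired off by passing to the neighbouring simplex. By uniform continuity the label-`0` vertex of
a fully labelled simplex is an approximate zero once `k` is large, compactness yields an exact
zero, and the strict sign conditions keep it off the boundary.
-/

open Finset Function

theorem Finset.even_card_of_involution {α : Type*} {s : Finset α} (f : α → α)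
    (hmaps : ∀ a ∈ s, f a ∈ s) (hinv : ∀ a ∈ s, f (f a) = a) (hne : ∀ a ∈ s, f a ≠ a) :
    Even #s := by
  classical
  let g : Function.End s := fun a => ⟨f a, hmaps a a.2⟩
  have hg : g ^ 2 ^ 1 = 1 := funext fun a => Subtype.ext (hinv a a.2)
  have hfix : Fintype.card (Function.fixedPoints g) = 0 :=
    Fintype.card_eq_zero_iff.2 ⟨fun a => hne a.1 a.1.2 (congrArg Subtype.val a.2)⟩
  have := Equiv.Perm.card_fixedPoints_modEq (p := 2) hg
  rw [hfix, Fintype.card_coe] at this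
  exact Nat.even_iff.2 this

theorem finRotate_inv_zero (n : ℕ) : (finRotate (n + 1))⁻¹ 0 = Fin.last n :=
  Equiv.Perm.inv_eq_iff_eq.2 finRotate_last.symm

theorem finRotate_inv_succ {n : ℕ} (i : Fin n) : (finRotate (n + 1))⁻¹ i.succ = i.castSucc := by
  rw [Equiv.Perm.inv_eq_iff_eq, finRotate_apply, Fin.coeSucc_eq_succ]

theorem IsCompact.exists_eq_zero_of_forall_norm_lt {X E : Type*} [TopologicalSpace X]
    [NormedAddGroup E] {K : Set X} {φ : X → E} (hK : IsCompact K) (hφ : ContinuousOn φ K)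
    (h : ∀ ε > 0, ∃ x ∈ K, ‖φ x‖ < ε) : ∃ x ∈ K, φ x = 0 := by
  obtain ⟨x₀, hx₀, -⟩ := h 1 one_pos
  obtain ⟨x, hx, hmin⟩ := hK.exists_isMinOn ⟨x₀, hx₀⟩ hφ.norm
  refine ⟨x, hx, norm_le_zero_iff.1 (not_lt.1 fun hpos => ?_)⟩
  obtain ⟨y, hy, hlt⟩ := h _ hpos
  exact (hmin hy).not_gt hlt

namespace Kuhn

open scoped Classical

variable {d k : ℕ}

/-- Given the labels `f` of the vertices of a `d`-simplex, the facet opposite vertex `j` is a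
door if it carries every label except `Fin.last d`. -/
def IsDoor (f : Fin (d + 1) → Fin (d + 1)) (j : Fin (d + 1)) : Prop :=
  ∀ v : Fin d, ∃ t, f (j.succAbove t) = v.castSucc

theorem isDoor_congr {f g : Fin (d + 1) → Fin (d + 1)} {j j' : Fin (d + 1)}
    (h : f ∘ j.succAbove = g ∘ j'.succAbove) : IsDoor f j ↔ IsDoor g j' := by
  refine forall_congr' fun v => exists_congr fun t => ?_
  rw [← comp_apply (f := f), h, comp_apply]

theorem isDoor_last_iff {f : Fin (d + 1) → Fin (d + 1)} {g : Fin d → Fin d}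
    (h : f ∘ Fin.castSucc = Fin.castSucc ∘ g) : IsDoor f (Fin.last d) ↔ Surjective g := by
  refine forall_congr' fun v => exists_congr fun t => ?_
  rw [Fin.succAbove_last, ← comp_apply (f := f), h, comp_apply, Fin.castSucc_inj]

theorem not_isDoor_of_castSucc_notMem_range {f : Fin (d + 1) → Fin (d + 1)} {v : Fin d}
    (hv : v.castSucc ∉ Set.range f) (j : Fin (d + 1)) : ¬ IsDoor f j := fun h =>
  let ⟨_, ht⟩ := h v
  hv ⟨_, ht⟩

theorem isDoor_iff_eq_last_of_bijective {f : Fin (d + 1) → Fin (d + 1)} (hf : Bijective f)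
    (j : Fin (d + 1)) : IsDoor f j ↔ f j = Fin.last d := by
  refine ⟨fun h => ?_, fun h v => ?_⟩
  · by_contra hj
    obtain ⟨v, hv⟩ := Fin.exists_castSucc_eq.2 hj
    obtain ⟨t, ht⟩ := h v
    exact Fin.succAbove_ne j t (hf.1 (ht.trans hv))
  · obtain ⟨a, ha⟩ := hf.2 v.castSucc
    obtain ⟨t, rfl⟩ := Fin.exists_succAbove_eq (x := a) (y := j) fun hj =>
      Fin.castSucc_ne_last v (ha.symm.trans (hj ▸ h))
    exact ⟨t, ha⟩

theorem card_isDoor_of_bijective {f : Fin (d + 1) → Fin (d + 1)} (hf : Bijective f) :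
    #{j | IsDoor f j} = 1 := by
  obtain ⟨j₀, hj₀⟩ := hf.2 (Fin.last d)
  refine card_eq_one.2 ⟨j₀, ?_⟩
  ext j
  simp only [mem_filter, mem_univ, true_and, mem_singleton,
    isDoor_iff_eq_last_of_bijective hf, ← hj₀, hf.1.eq_iff]

theorem isDoor_iff_surjective_comp_succAbove {f : Fin (d + 1) → Fin (d + 1)}
    {g : Fin (d + 1) → Fin d} (h : ∀ j, f j = (g j).castSucc) (j : Fin (d + 1)) :
    IsDoor f j ↔ Surjective (g ∘ j.succAbove) := by
  simp only [IsDoor, h, Fin.castSucc_inj, Surjective, comp_apply]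

/-- `g` identifies exactly one pair of points, and these are the points whose removal keeps it
surjective. -/
theorem card_surjective_comp_succAbove {g : Fin (d + 1) → Fin d} (hg : Surjective g) :
    #{j : Fin (d + 1) | Surjective (g ∘ j.succAbove)} = 2 := by
  obtain ⟨j₁, j₂, hne, hj⟩ : ∃ j₁ j₂, j₁ ≠ j₂ ∧ g j₁ = g j₂ := by
    by_contra! h
    have := Fintype.card_le_of_injective g fun a b hab => not_imp_not.1 (h a b) hab
    simp at this
  have key : ∀ {a b}, a ≠ b → g a = g b → Surjective (g ∘ a.succAbove) :=
    fun {a _} hab hgab v => by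
      obtain ⟨c, rfl⟩ := hg v
      rcases eq_or_ne c a with rfl | hc
      · obtain ⟨t, ht⟩ := Fin.exists_succAbove_eq hab.symm
        exact ⟨t, by simp [ht, hgab]⟩
      · obtain ⟨t, ht⟩ := Fin.exists_succAbove_eq hc
        exact ⟨t, by simp [ht]⟩
  suffices (univ.filter fun j : Fin (d + 1) => Surjective (g ∘ j.succAbove)) = {j₁, j₂} by
    rw [this, card_pair hne]
  ext j
  simp only [mem_filter, mem_univ, true_and, mem_insert, mem_singleton]
  refine ⟨fun hj' => ?_, by rintro (rfl | rfl); exacts [key hne hj, key hne.symm hj.symm]⟩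
  by_contra! hj12
  obtain ⟨t₁, rfl⟩ := Fin.exists_succAbove_eq hj12.1.symm
  obtain ⟨t₂, rfl⟩ := Fin.exists_succAbove_eq hj12.2.symm
  exact hne (congrArg _ (Finite.injective_iff_surjective.2 hj' hj))

theorem odd_card_isDoor_iff (f : Fin (d + 1) → Fin (d + 1)) :
    Odd #{j | IsDoor f j} ↔ Surjective f := by
  by_cases hcast : ∃ v : Fin d, v.castSucc ∉ Set.range f
  · obtain ⟨v, hv⟩ := hcast
    simp only [not_isDoor_of_castSucc_notMem_range hv, filter_false, card_empty]
    exact iff_of_false (by decide) fun hf => hv (hf _)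
  push Not at hcast
  by_cases hf : Surjective f
  · simp [card_isDoor_of_bijective ⟨Finite.injective_iff_surjective.2 hf, hf⟩, hf]
  have hlast : ∀ j, f j ≠ Fin.last d := fun j hj => hf fun v => by
    induction v using Fin.lastCases with
    | last => exact ⟨j, hj⟩
    | cast v => exact hcast v
  set g : Fin (d + 1) → Fin d := fun j => (f j).castPred (hlast j)
  have hg : Surjective g := fun v => by
    obtain ⟨j, hj⟩ := hcast v
    exact ⟨j, by simp [g, hj]⟩
  have hdoor : ∀ j, IsDoor f j ↔ Surjective (g ∘ j.succAbove) :=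
    isDoor_iff_surjective_comp_succAbove fun j => (Fin.castSucc_castPred _ _).symm
  rw [filter_congr fun j _ => hdoor j, card_surjective_comp_succAbove hg]
  exact iff_of_false (by decide) hf

theorem odd_card_isDoor_iff_odd_card_surjective {α : Type*} [Fintype α]
    (F : α → Fin (d + 1) → Fin (d + 1)) :
    Odd #{p : α × Fin (d + 1) | IsDoor (F p.1) p.2} ↔ Odd #{a | Surjective (F a)} := by
  rw [card_filter, Fintype.sum_prod_type]
  simp only [← card_filter]
  rw [odd_sum_iff_odd_card_odd]
  simp only [odd_card_isDoor_iff]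

structure IsProperLabelling (k : ℕ) (L : (Fin d → ℕ) → Fin (d + 1)) : Prop where
  ne_succ : ∀ x, (∀ i, x i ≤ k) → ∀ i, x i = 0 → L x ≠ i.succ
  ne_zero : ∀ x, (∀ i, x i ≤ k) → ∀ i, x i = k → L x ≠ 0

section FaceLabelling

variable {e : ℕ} {L : (Fin (e + 1) → ℕ) → Fin (e + 2)}

/-- The labelling induced on the face `x_last = 0`; the junk value `0` replaces the label `last`,
which a proper labelling never uses there. -/
def faceLabelling (L : (Fin (e + 1) → ℕ) → Fin (e + 2)) (y : Fin e → ℕ) : Fin (e + 1) :=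
  Fin.lastCases (motive := fun _ => Fin (e + 1)) 0 id (L (Fin.snoc y 0))

theorem snoc_zero_le {y : Fin e → ℕ} (hy : ∀ i, y i ≤ k) (i : Fin (e + 1)) :
    (Fin.snoc y 0 : Fin (e + 1) → ℕ) i ≤ k := by
  induction i using Fin.lastCases <;> simp [hy]

theorem castSucc_faceLabelling (hL : IsProperLabelling k L) {y : Fin e → ℕ} (hy : ∀ i, y i ≤ k) :
    (faceLabelling L y).castSucc = L (Fin.snoc y 0) := by
  have hne : L (Fin.snoc y 0) ≠ Fin.last _ := by
    simpa using hL.ne_succ _ (snoc_zero_le hy) (Fin.last e) (by simp)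
  obtain ⟨v, hv⟩ := Fin.exists_castSucc_eq.2 hne
  simp [faceLabelling, ← hv]

theorem IsProperLabelling.faceLabelling (hL : IsProperLabelling k L) :
    IsProperLabelling k (faceLabelling L) where
  ne_succ y hy i hi h := hL.ne_succ _ (snoc_zero_le hy) i.castSucc (by simpa using hi) <| by
    rw [← castSucc_faceLabelling hL hy, h, Fin.succ_castSucc]
  ne_zero y hy i hi h := hL.ne_zero _ (snoc_zero_le hy) i.castSucc (by simpa using hi) <| by
    rw [← castSucc_faceLabelling hL hy, h, Fin.castSucc_zero]

end FaceLabelling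

/-- The Kuhn simplex `(b, σ)` of the grid `{0, …, k}ᵈ` has the vertices
`b + e (σ 0) + ⋯ + e (σ (j - 1))`. Bases lie in `Fin k` to make the type finite, so the flips
below wrap around modulo `k`; they are only used where no wrap-around occurs. -/
abbrev Simplex (d k : ℕ) := (Fin d → Fin k) × Equiv.Perm (Fin d)

namespace Simplex

def vertex (s : Simplex d k) (j : Fin (d + 1)) (i : Fin d) : ℕ :=
  s.1 i + if (s.2⁻¹ i).castSucc < j then 1 else 0

theorem vertex_le (s : Simplex d k) (j : Fin (d + 1)) (i : Fin d) : s.vertex j i ≤ k := by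
  have := (s.1 i).isLt
  unfold vertex
  split_ifs <;> omega

theorem abs_vertex_sub_vertex_le (s : Simplex d k) (t t' : Fin (d + 1)) (i : Fin d) :
    |(s.vertex t i : ℝ) - s.vertex t' i| ≤ 1 := by
  unfold vertex
  split_ifs <;> norm_num

section Flip

variable {e : ℕ}

def flipMid (s : Simplex (e + 1) k) (i : Fin e) : Simplex (e + 1) k :=
  (s.1, s.2 * Equiv.swap i.castSucc i.succ)

theorem vertex_flipMid (s : Simplex (e + 1) k) (i : Fin e) {t : Fin (e + 2)}
    (ht : t ≠ i.castSucc.succ) : (flipMid s i).vertex t = s.vertex t := by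
  funext x
  have hinv : (flipMid s i).2⁻¹ x = Equiv.swap i.castSucc i.succ (s.2⁻¹ x) := by
    simp [flipMid, mul_inv_rev, Equiv.swap_inv]
  have ht' : (t : ℕ) ≠ i + 1 := fun h => ht (Fin.ext (by simpa using h))
  unfold vertex
  rw [hinv]
  congr 1
  rcases eq_or_ne (s.2⁻¹ x) i.castSucc with h | h
  · simp only [h, Equiv.swap_apply_left, Fin.lt_def, Fin.val_castSucc, Fin.val_succ]
    split_ifs <;> omega
  rcases eq_or_ne (s.2⁻¹ x) i.succ with h' | h'
  · simp only [h', Equiv.swap_apply_right, Fin.lt_def, Fin.val_castSucc, Fin.val_succ]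
    split_ifs <;> omega
  rw [Equiv.swap_apply_of_ne_of_ne h h']

theorem flipMid_flipMid (s : Simplex (e + 1) k) (i : Fin e) : flipMid (flipMid s i) i = s := by
  simp [flipMid, mul_assoc]

theorem flipMid_ne (s : Simplex (e + 1) k) (i : Fin e) : flipMid s i ≠ s := fun h => by
  have := congrArg (fun σ : Equiv.Perm _ => σ i.castSucc) (congrArg Prod.snd h)
  simp only [flipMid, Equiv.Perm.mul_apply, Equiv.swap_apply_left,
    EmbeddingLike.apply_eq_iff_eq] at this
  exact (Fin.castSucc_lt_succ (i := i)).ne' this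

variable [NeZero k]

def flipFirst (s : Simplex (e + 1) k) : Simplex (e + 1) k :=
  (update s.1 (s.2 0) (s.1 (s.2 0) + 1), s.2 * finRotate (e + 1))

def flipLast (s : Simplex (e + 1) k) : Simplex (e + 1) k :=
  (update s.1 (s.2 (Fin.last e)) (s.1 (s.2 (Fin.last e)) - 1), s.2 * (finRotate (e + 1))⁻¹)

theorem flipFirst_perm_last (s : Simplex (e + 1) k) : (flipFirst s).2 (Fin.last e) = s.2 0 := by
  simp [flipFirst]

theorem flipLast_perm_zero (s : Simplex (e + 1) k) : (flipLast s).2 0 = s.2 (Fin.last e) := by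
  rw [flipLast, Equiv.Perm.mul_apply, finRotate_inv_zero]

theorem flipLast_flipFirst (s : Simplex (e + 1) k) : flipLast (flipFirst s) = s := by
  ext1
  · simp only [flipLast, flipFirst_perm_last]
    simp [flipFirst]
  · simp [flipLast, flipFirst]

theorem flipFirst_flipLast (s : Simplex (e + 1) k) : flipFirst (flipLast s) = s := by
  ext1
  · simp only [flipFirst, flipLast_perm_zero]
    simp [flipLast]
  · simp [flipLast, flipFirst, mul_assoc]

theorem val_flipLast_add_one (s : Simplex (e + 1) k) (h : (s.1 (s.2 (Fin.last e)) : ℕ) ≠ 0) :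
    ((flipLast s).1 ((flipLast s).2 0) : ℕ) + 1 = s.1 (s.2 (Fin.last e)) := by
  rw [flipLast_perm_zero]
  simp only [flipLast, update_self]
  rw [Fin.val_sub_one_of_ne_zero (Fin.val_ne_zero_iff.1 h)]
  omega

theorem vertex_flipFirst_castSucc (s : Simplex (e + 1) k) (hs : (s.1 (s.2 0) : ℕ) + 1 < k)
    (t : Fin (e + 1)) : (flipFirst s).vertex t.castSucc = s.vertex t.succ := by
  funext i
  have hinv : (flipFirst s).2⁻¹ i = (finRotate (e + 1))⁻¹ (s.2⁻¹ i) := by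
    simp [flipFirst]
  rcases Fin.eq_zero_or_eq_succ (s.2⁻¹ i) with hi | ⟨u, hu⟩
  · obtain rfl : i = s.2 0 := Equiv.Perm.inv_eq_iff_eq.1 hi
    rw [hi, finRotate_inv_zero] at hinv
    simp only [vertex, hinv, hi]
    simp [flipFirst, Fin.val_add_one_of_lt' hs, Fin.le_last]
  · have hi : i ≠ s.2 0 := by
      rintro rfl
      exact Fin.succ_ne_zero u (by simpa using hu.symm)
    rw [hu, finRotate_inv_succ] at hinv
    simp only [vertex, hinv, hu]
    simp [flipFirst, hi]

end Flip

section Lift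

variable {e : ℕ}

def extendPerm (σ : Equiv.Perm (Fin e)) : Equiv.Perm (Fin (e + 1)) :=
  finSuccEquivLast.symm.permCongr σ.optionCongr

@[simp]
theorem extendPerm_castSucc (σ : Equiv.Perm (Fin e)) (t : Fin e) :
    extendPerm σ t.castSucc = (σ t).castSucc := by
  simp [extendPerm, Equiv.permCongr_apply]

@[simp]
theorem extendPerm_last (σ : Equiv.Perm (Fin e)) : extendPerm σ (Fin.last e) = Fin.last e := by
  simp [extendPerm, Equiv.permCongr_apply]

@[simp]
theorem extendPerm_inv (σ : Equiv.Perm (Fin e)) : (extendPerm σ)⁻¹ = extendPerm σ⁻¹ := by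
  rw [inv_eq_iff_mul_eq_one]
  ext t
  induction t using Fin.lastCases <;> simp

theorem extendPerm_injective : Injective (extendPerm (e := e)) := fun _ _ h =>
  Equiv.ext fun t => Fin.castSucc_injective _ <| by
    simpa using congrArg (fun π : Equiv.Perm _ => π t.castSucc) h

theorem exists_extendPerm_eq {π : Equiv.Perm (Fin (e + 1))} (h : π (Fin.last e) = Fin.last e) :
    ∃ σ, extendPerm σ = π := by
  set π' := finSuccEquivLast.permCongr π
  have hnone : π' none = none := by simp [π', Equiv.permCongr_apply, h]
  refine ⟨Equiv.removeNone π', ?_⟩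
  have hπ' : (Equiv.removeNone π').optionCongr = π' := by
    have := Equiv.Perm.decomposeOption.symm_apply_apply π'
    rwa [Equiv.Perm.decomposeOption_apply, Equiv.Perm.decomposeOption_symm_apply, hnone,
      Equiv.swap_self, ← Equiv.Perm.one_def, one_mul] at this
  rw [extendPerm, hπ']
  ext t
  simp [π', Equiv.permCongr_apply]

variable [NeZero k]

def liftFace (s : Simplex e k) : Simplex (e + 1) k :=
  (Fin.snoc s.1 0, extendPerm s.2)

theorem vertex_liftFace_castSucc (s : Simplex e k) (t : Fin (e + 1)) :
    (liftFace s).vertex t.castSucc = Fin.snoc (s.vertex t) 0 := by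
  funext i
  induction i using Fin.lastCases with
  | last => simp [vertex, liftFace, Fin.le_last]
  | cast i => simp [vertex, liftFace]

theorem liftFace_injective : Injective (liftFace (e := e) (k := k)) := fun _ _ h =>
  Prod.ext (Fin.snoc_left_injective (α := fun _ => Fin k) 0 (congrArg Prod.fst h))
    (extendPerm_injective (congrArg Prod.snd h))

end Lift

section Doors

variable {e : ℕ} {L : (Fin (e + 1) → ℕ) → Fin (e + 2)}

theorem lt_of_isDoor_zero (hL : IsProperLabelling k L) {s : Simplex (e + 1) k}
    (hs : IsDoor (L ∘ s.vertex) 0) : (s.1 (s.2 0) : ℕ) + 1 < k := by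
  obtain ⟨t, ht⟩ := hs 0
  have hv : s.vertex t.succ (s.2 0) = s.1 (s.2 0) + 1 := by simp [vertex, Fin.succ_pos]
  have := (s.1 (s.2 0)).isLt
  by_contra h
  exact hL.ne_zero (s.vertex t.succ) (s.vertex_le _) (s.2 0) (by omega) (by simpa using ht)

theorem ne_zero_of_isDoor_last (hL : IsProperLabelling k L) {s : Simplex (e + 1) k}
    (hs : IsDoor (L ∘ s.vertex) (Fin.last _)) (hσ : s.2 (Fin.last e) ≠ Fin.last e) :
    (s.1 (s.2 (Fin.last e)) : ℕ) ≠ 0 := by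
  intro h0
  obtain ⟨ν, hν⟩ := Fin.exists_castSucc_eq.2 hσ
  obtain ⟨t, ht⟩ := hs ν.succ
  have hv : s.vertex t.castSucc (s.2 (Fin.last e)) = 0 := by
    simp [vertex, h0, (Fin.le_last t).not_gt]
  refine hL.ne_succ _ (s.vertex_le _) _ hv ?_
  rw [← hν, Fin.succ_castSucc]
  simpa using ht

variable [NeZero k]

theorem isDoor_flipFirst_last_iff {s : Simplex (e + 1) k} (hs : (s.1 (s.2 0) : ℕ) + 1 < k) :
    IsDoor (L ∘ (flipFirst s).vertex) (Fin.last _) ↔ IsDoor (L ∘ s.vertex) 0 :=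
  isDoor_congr <| by
    rw [Fin.succAbove_last, Fin.succAbove_zero]
    funext t
    exact congrArg L (vertex_flipFirst_castSucc s hs t)

/-- The facet of `p.1` opposite vertex `p.2` lies in the face `x_last = 0`. -/
def IsBottomFacet (p : Simplex (e + 1) k × Fin (e + 2)) : Prop :=
  p.2 = Fin.last _ ∧ p.1.2 (Fin.last e) = Fin.last e ∧ p.1.1 (Fin.last e) = 0

theorem not_isBottomFacet_flipFirst {s : Simplex (e + 1) k} (hs : (s.1 (s.2 0) : ℕ) + 1 < k) :
    ¬ IsBottomFacet (flipFirst s, Fin.last _) := by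
  rintro ⟨-, hσ, hb⟩
  rw [flipFirst_perm_last] at hσ
  have := congrArg Fin.val hb
  simp [flipFirst, hσ, Fin.val_add_one_of_lt' (hσ ▸ hs)] at this

/-- The simplex on the other side of the facet of `p.1` opposite vertex `p.2`, together with its
own vertex opposite that facet. -/
def neighbor (p : Simplex (e + 1) k × Fin (e + 2)) : Simplex (e + 1) k × Fin (e + 2) :=
  Fin.cases (flipFirst p.1, Fin.last _)
    (Fin.lastCases (flipLast p.1, 0) fun i => (flipMid p.1 i, i.castSucc.succ)) p.2

@[simp]
theorem neighbor_zero (s : Simplex (e + 1) k) : neighbor (s, 0) = (flipFirst s, Fin.last _) :=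
  rfl

@[simp]
theorem neighbor_last (s : Simplex (e + 1) k) : neighbor (s, Fin.last _) = (flipLast s, 0) := by
  simp [neighbor, ← Fin.succ_last]

@[simp]
theorem neighbor_mid (s : Simplex (e + 1) k) (i : Fin e) :
    neighbor (s, i.castSucc.succ) = (flipMid s i, i.castSucc.succ) := by
  simp [neighbor]

theorem neighbor_spec (hL : IsProperLabelling k L) {p : Simplex (e + 1) k × Fin (e + 2)}
    (hp : IsDoor (L ∘ p.1.vertex) p.2) (hb : ¬ IsBottomFacet p) :
    (IsDoor (L ∘ (neighbor p).1.vertex) (neighbor p).2 ∧ ¬ IsBottomFacet (neighbor p)) ∧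
      neighbor (neighbor p) = p ∧ neighbor p ≠ p := by
  obtain ⟨s, j⟩ := p
  induction j using Fin.cases with
  | zero =>
    have hs := lt_of_isDoor_zero hL hp
    simp only [neighbor_zero, neighbor_last, flipLast_flipFirst]
    exact ⟨⟨(isDoor_flipFirst_last_iff hs).2 hp, not_isBottomFacet_flipFirst hs⟩, trivial,
      by simp⟩
  | succ j =>
    induction j using Fin.lastCases with
    | last =>
      rw [Fin.succ_last] at hp hb ⊢
      simp only [neighbor_zero, neighbor_last, flipFirst_flipLast]
      have hσ : (s.1 (s.2 (Fin.last e)) : ℕ) ≠ 0 := by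
        by_cases hσ : s.2 (Fin.last e) = Fin.last e
        · exact fun h => hb ⟨rfl, hσ, Fin.ext (hσ ▸ h)⟩
        · exact ne_zero_of_isDoor_last hL hp hσ
      have hs : ((flipLast s).1 ((flipLast s).2 0) : ℕ) + 1 < k :=
        val_flipLast_add_one s hσ ▸ (s.1 _).isLt
      have hdoor := (isDoor_flipFirst_last_iff hs).1 (by rwa [flipFirst_flipLast])
      exact ⟨⟨hdoor, fun h => by simp [IsBottomFacet] at h⟩, trivial, by simp⟩
    | cast i =>
      have hdoor : IsDoor (L ∘ (flipMid s i).vertex) i.castSucc.succ ↔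
          IsDoor (L ∘ s.vertex) i.castSucc.succ :=
        isDoor_congr <| funext fun t => congrArg L (vertex_flipMid s i (Fin.succAbove_ne _ t))
      simp only [neighbor_mid, flipMid_flipMid]
      exact ⟨⟨hdoor.2 hp, fun h => by simp [IsBottomFacet] at h⟩, trivial, by simp [flipMid_ne]⟩

theorem even_card_isDoor_not_isBottomFacet (hL : IsProperLabelling k L) :
    Even #{p : Simplex (e + 1) k × Fin (e + 2) |
      IsDoor (L ∘ p.1.vertex) p.2 ∧ ¬ IsBottomFacet p} := by
  refine even_card_of_involution neighbor ?_ ?_ ?_ <;> intro p hp <;>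
    simp only [mem_filter, mem_univ, true_and] at hp ⊢
  exacts [(neighbor_spec hL hp.1 hp.2).1, (neighbor_spec hL hp.1 hp.2).2.1,
    (neighbor_spec hL hp.1 hp.2).2.2]

theorem isDoor_liftFace_last_iff (hL : IsProperLabelling k L) (s : Simplex e k) :
    IsDoor (L ∘ (liftFace s).vertex) (Fin.last _) ↔ Surjective (faceLabelling L ∘ s.vertex) :=
  isDoor_last_iff <| funext fun t => by
    simp [vertex_liftFace_castSucc, castSucc_faceLabelling hL (s.vertex_le t)]

theorem card_isDoor_isBottomFacet (hL : IsProperLabelling k L) :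
    #{p : Simplex (e + 1) k × Fin (e + 2) | IsDoor (L ∘ p.1.vertex) p.2 ∧ IsBottomFacet p} =
      #{s : Simplex e k | Surjective (faceLabelling L ∘ s.vertex)} := by
  have hinj : Injective fun s : Simplex e k => (liftFace s, Fin.last (e + 1)) :=
    fun _ _ h => liftFace_injective (congrArg Prod.fst h)
  rw [← card_image_of_injective _ hinj]
  congr 1
  ext ⟨s, j⟩
  simp only [mem_filter, mem_univ, true_and, mem_image, Prod.mk.injEq]
  constructor
  · rintro ⟨hdoor, rfl, hσ, hb⟩
    obtain ⟨σ, hσ'⟩ := exists_extendPerm_eq hσ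
    have hs : liftFace (Fin.init s.1, σ) = s := by
      rw [liftFace, hσ', ← hb, Fin.snoc_init_self]
    exact ⟨_, (isDoor_liftFace_last_iff hL _).1 (by rwa [hs]), hs, rfl⟩
  · rintro ⟨s', hs', rfl, rfl⟩
    exact ⟨(isDoor_liftFace_last_iff hL s').2 hs', rfl, by simp [liftFace]⟩

end Doors

end Simplex

theorem IsProperLabelling.odd_card_surjective [NeZero k] :
    ∀ {d} {L : (Fin d → ℕ) → Fin (d + 1)}, IsProperLabelling k L →
      Odd #{s : Simplex d k | Surjective (L ∘ s.vertex)}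
  | 0, L, _ => by simp [Surjective, Fin.eq_zero]
  | e + 1, L, hL => by
    rw [← odd_card_isDoor_iff_odd_card_surjective,
      ← card_filter_add_card_filter_not (p := Simplex.IsBottomFacet), filter_filter, filter_filter,
      Simplex.card_isDoor_isBottomFacet hL]
    exact hL.faceLabelling.odd_card_surjective.add_even
      (Simplex.even_card_isDoor_not_isBottomFacet hL)

end Kuhn

namespace PoincareMiranda

open Kuhn Filter Set

variable {d : ℕ}

noncomputable def signLabel (v : Fin d → ℝ) : Fin (d + 1) :=
  if h : ∃ i, v i < 0 then h.choose.succ else 0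

theorem lt_zero_of_signLabel_eq_succ {v : Fin d → ℝ} {i : Fin d} (h : signLabel v = i.succ) :
    v i < 0 := by
  unfold signLabel at h
  split_ifs at h with hv
  · exact Fin.succ_injective _ h ▸ hv.choose_spec
  · exact absurd h.symm (Fin.succ_ne_zero i)

theorem nonneg_of_signLabel_eq_zero {v : Fin d → ℝ} (h : signLabel v = 0) (i : Fin d) :
    0 ≤ v i := by
  unfold signLabel at h
  split_ifs at h with hv
  · exact absurd h (Fin.succ_ne_zero _)
  · exact not_lt.1 fun hi => hv ⟨i, hi⟩

theorem norm_lt_of_forall_exists_neg {u : Fin d → ℝ} {ε : ℝ} (hε : 0 < ε) (hu : ∀ i, 0 ≤ u i)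
    (h : ∀ i, ∃ w : Fin d → ℝ, w i < 0 ∧ dist u w < ε) : ‖u‖ < ε := by
  refine (pi_norm_lt_iff hε).2 fun i => ?_
  obtain ⟨w, hw, hdist⟩ := h i
  calc ‖u i‖ = u i := Real.norm_of_nonneg (hu i)
    _ ≤ u i - w i := by linarith
    _ ≤ dist (u i) (w i) := (Real.dist_eq _ _).symm ▸ le_abs_self _
    _ ≤ dist u w := dist_le_pi_dist u w i
    _ < ε := hdist

noncomputable def gridPoint (m M : Fin d → ℝ) (k : ℕ) (x : Fin d → ℕ) : Fin d → ℝ :=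
  fun i => m i + (M i - m i) * x i / k

section Grid

variable {m M : Fin d → ℝ} {k : ℕ}

theorem gridPoint_mem_Icc (hmM : m ≤ M) (hk : 0 < k) {x : Fin d → ℕ} (hx : ∀ i, x i ≤ k) :
    gridPoint m M k x ∈ Icc m M := by
  have hk' : (0 : ℝ) < k := by exact_mod_cast hk
  refine ⟨fun i => ?_, fun i => ?_⟩ <;> simp only [gridPoint]
  · have := sub_nonneg.2 (hmM i)
    have : 0 ≤ (M i - m i) * x i / k := by positivity
    linarith
  · have hx' : (x i : ℝ) / k ≤ 1 := (div_le_one hk').2 (by exact_mod_cast hx i)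
    have := mul_le_mul_of_nonneg_left hx' (sub_nonneg.2 (hmM i))
    rw [mul_div_assoc]
    linarith

theorem gridPoint_apply_of_eq_zero {x : Fin d → ℕ} {i : Fin d} (hi : x i = 0) :
    gridPoint m M k x i = m i := by
  simp [gridPoint, hi]

theorem gridPoint_apply_of_eq (hk : 0 < k) {x : Fin d → ℕ} {i : Fin d} (hi : x i = k) :
    gridPoint m M k x i = M i := by
  have hk' : (k : ℝ) ≠ 0 := by exact_mod_cast hk.ne'
  simp [gridPoint, hi, mul_div_assoc, div_self hk']

theorem dist_gridPoint_lt (hmM : m ≤ M) {δ : ℝ} (hδ : 0 < δ) (hk : ∀ i, (M i - m i) / k < δ)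
    {x y : Fin d → ℕ} (hxy : ∀ i, |(x i : ℝ) - y i| ≤ 1) :
    dist (gridPoint m M k x) (gridPoint m M k y) < δ := by
  refine (dist_pi_lt_iff hδ).2 fun i => ?_
  have hmM' := sub_nonneg.2 (hmM i)
  calc dist (gridPoint m M k x i) (gridPoint m M k y i)
      = (M i - m i) * |(x i : ℝ) - y i| / k := by
        rw [Real.dist_eq, gridPoint, gridPoint, add_sub_add_left_eq_sub, ← sub_div, ← mul_sub,
          abs_div, abs_mul, abs_of_nonneg hmM', Nat.abs_cast]
    _ ≤ (M i - m i) * 1 / k := by gcongr; exact hxy i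
    _ < δ := by rw [mul_one]; exact hk i

theorem isProperLabelling_signLabel (hmM : m ≤ M) (hk : 0 < k) {φ : (Fin d → ℝ) → Fin d → ℝ}
    (hlow : ∀ x ∈ Icc m M, ∀ i, x i = m i → 0 ≤ φ x i)
    (hhigh : ∀ x ∈ Icc m M, ∀ i, x i = M i → φ x i < 0) :
    IsProperLabelling k (signLabel ∘ φ ∘ gridPoint m M k) where
  ne_succ _ hx i hi h := (hlow _ (gridPoint_mem_Icc hmM hk hx) i
    (gridPoint_apply_of_eq_zero hi)).not_gt (lt_zero_of_signLabel_eq_succ h)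
  ne_zero _ hx i hi h := (hhigh _ (gridPoint_mem_Icc hmM hk hx) i
    (gridPoint_apply_of_eq hk hi)).not_ge (nonneg_of_signLabel_eq_zero h i)

end Grid

theorem exists_norm_lt {m M : Fin d → ℝ} (hmM : m ≤ M) {φ : (Fin d → ℝ) → Fin d → ℝ}
    (hφ : ContinuousOn φ (Icc m M)) (hlow : ∀ x ∈ Icc m M, ∀ i, x i = m i → 0 ≤ φ x i)
    (hhigh : ∀ x ∈ Icc m M, ∀ i, x i = M i → φ x i < 0) {ε : ℝ} (hε : 0 < ε) :
    ∃ x ∈ Icc m M, ‖φ x‖ < ε := by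
  obtain ⟨δ, hδ, hφδ⟩ := Metric.uniformContinuousOn_iff.1
    (isCompact_Icc.uniformContinuousOn_of_continuous hφ) ε hε
  obtain ⟨k, hk, hkδ⟩ := ((eventually_gt_atTop 0).and (eventually_all.2 fun i =>
    (tendsto_const_div_atTop_nhds_zero_nat (M i - m i)).eventually (gt_mem_nhds hδ))).exists
  have : NeZero k := ⟨hk.ne'⟩
  set p := gridPoint m M k
  have hp : ∀ x, (∀ i, x i ≤ k) → p x ∈ Icc m M := fun _ hx => gridPoint_mem_Icc hmM hk hx
  obtain ⟨s, hs⟩ := Finset.card_pos.1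
    (isProperLabelling_signLabel hmM hk hlow hhigh).odd_card_surjective.pos
  replace hs : Function.Surjective (signLabel ∘ φ ∘ p ∘ s.vertex) := (Finset.mem_filter.1 hs).2
  obtain ⟨t₀, ht₀⟩ := hs 0
  refine ⟨p (s.vertex t₀), hp _ (s.vertex_le t₀),
    norm_lt_of_forall_exists_neg hε (nonneg_of_signLabel_eq_zero ht₀) fun i => ?_⟩
  obtain ⟨t, ht⟩ := hs i.succ
  exact ⟨φ (p (s.vertex t)), lt_zero_of_signLabel_eq_succ ht,
    hφδ _ (hp _ (s.vertex_le _)) _ (hp _ (s.vertex_le _))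
      (dist_gridPoint_lt hmM hδ hkδ (s.abs_vertex_sub_vertex_le _ _))⟩

end PoincareMiranda

/-- Poincaré–Miranda theorem on a closed box. -/
theorem stmt_8 (n : ℕ) (m M : Fin (n + 1) → ℝ) (hmM : ∀ i, m i < M i)
    (φ : (Fin (n + 1) → ℝ) → Fin (n + 1) → ℝ)
    (hφcont : ContinuousOn φ (Set.pi Set.univ fun i => Set.Icc (m i) (M i)))
    (hlow : ∀ x ∈ Set.pi Set.univ fun i => Set.Icc (m i) (M i),
      ∀ i, x i = m i → 0 < φ x i)
    (hhigh : ∀ x ∈ Set.pi Set.univ fun i => Set.Icc (m i) (M i),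
      ∀ i, x i = M i → φ x i < 0) :
    ∃ x ∈ Set.pi Set.univ fun i => Set.Ioo (m i) (M i), φ x = 0 := by
  rw [Set.pi_univ_Icc] at hφcont hlow hhigh
  obtain ⟨x, hx, hx0⟩ := isCompact_Icc.exists_eq_zero_of_forall_norm_lt hφcont fun _ hε =>
    PoincareMiranda.exists_norm_lt (fun i => (hmM i).le) hφcont
      (fun x hx i hi => (hlow x hx i hi).le) hhigh hε
  refine ⟨x, fun i _ => ⟨(hx.1 i).lt_of_ne fun h => ?_, (hx.2 i).lt_of_ne fun h => ?_⟩, hx0⟩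
  · exact (hlow x hx i h.symm).ne' (congrFun hx0 i)
  · exact (hhigh x hx i h).ne (congrFun hx0 i)
end

section
/- Let x : ℝ → ℝ be T-periodic and continuously differentiable, and suppose x'(t) = λ(H(t, y(t−ε)) − b(x(t))) where λ ∈ (0,1), b is strictly increasing with b(0) = 0, H is continuous, nondecreasing in its second variable with H(t,z) > 0 for z > 0, and y : ℝ → ℝ satisfies y(t) ≥ m' > 0 for all t. If mₙ > 0 satisfies b(mₙ) < H(t, m') for all t, then x(t) > mₙ for all t, provided x(t) ≥ 0 for all t. -/
theorem stmt_12 (T ε lam m' mn : ℝ) (hT : 0 < T) (hlam : 0 < lam) (hlam1 : lam < 1)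
    (b : ℝ → ℝ) (H : ℝ → ℝ → ℝ) (x y : ℝ → ℝ)
    (hb0 : b 0 = 0) (hbmono : StrictMonoOn b (Set.Ici 0))
    (hHcont : Continuous fun p : ℝ × ℝ => H p.1 p.2)
    (hHmono : ∀ t, Monotone (H t))
    (hHpos : ∀ t z, 0 < z → 0 < H t z)
    (hxC1 : ContDiff ℝ 1 x)
    (hxper : ∀ t, x (t + T) = x t)
    (hode : ∀ t, deriv x t = lam * (H t (y (t - ε)) - b (x t)))
    (hm' : 0 < m') (hy : ∀ t, m' ≤ y t)
    (hmn : 0 < mn) (hbmn : ∀ t, b mn < H t m')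
    (hxnonneg : ∀ t, 0 ≤ x t) :
    ∀ t, mn < x t := by
  have hper : Function.Periodic x T := hxper
  have hxc : Continuous x := hxC1.continuous
  obtain ⟨t₀, ht₀mem, ht₀⟩ := (isCompact_Icc (a := (0:ℝ)) (b := T)).exists_isMinOn
    (Set.nonempty_Icc.mpr hT.le) hxc.continuousOn
  have hglob : ∀ s, x t₀ ≤ x s := by
    intro s
    obtain ⟨u, hu, hus⟩ := hper.exists_mem_Ico₀ hT s
    rw [hus]
    exact ht₀ (Set.mem_Icc.mpr ⟨hu.1, hu.2.le⟩)
  have hloc : IsLocalMin x t₀ := Filter.Eventually.of_forall hglob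
  have hderiv : deriv x t₀ = 0 := hloc.deriv_eq_zero
  have h0 := hode t₀
  rw [hderiv] at h0
  have heq : b (x t₀) = H t₀ (y (t₀ - ε)) := by
    have := (mul_eq_zero.mp h0.symm).resolve_left hlam.ne'
    linarith
  have h1 : b mn < b (x t₀) := by
    calc b mn < H t₀ m' := hbmn t₀
      _ ≤ H t₀ (y (t₀ - ε)) := hHmono t₀ (hy _)
      _ = b (x t₀) := heq.symm
  have h2 : mn < x t₀ := (hbmono.lt_iff_lt (Set.mem_Ici.mpr hmn.le) (hxnonneg t₀)).mp h1
  intro t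
  exact lt_of_lt_of_le h2 (hglob t)
end

section
/- Let T > 0 and suppose u : ℝ → ℝ^{n+1} is a T-periodic C¹ solution of u' = λ N(u) for some λ ∈ (0,1), where N is the right-hand side of the feedback system (with the standing monotonicity and positivity hypotheses on F, Gⱼ, H, bᵢ). If constants mᵢ, Mᵢ are chosen as in the a priori bound construction (b₀(M₀) > F(t,0), bⱼ(Mⱼ) > Gⱼ(t,M_{j−1},0), bₙ(Mₙ) > H(t,M_{n−1}), b₀(m₀) < F(t,Mₙ), bⱼ(mⱼ) < Gⱼ(t,m_{j−1},Mₙ), bₙ(mₙ) < H(t,m_{n−1}) for all t), and u has nonnegative components, then mᵢ < uᵢ(t) < Mᵢ for all t and all i = 0,…,n. -/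
theorem aux_max_pt (f : ℝ → ℝ) (T : ℝ) (hT : 0 < T) (hf : ContDiff ℝ 1 f)
    (hper : Function.Periodic f T) : ∃ t0, (∀ t, f t ≤ f t0) ∧ deriv f t0 = 0 := by
  obtain ⟨t0, _, hmax⟩ := isCompact_Icc.exists_isMaxOn (s := Set.Icc 0 T)
    (Set.nonempty_Icc.2 hT.le) hf.continuous.continuousOn
  have hglob : ∀ t, f t ≤ f t0 := by
    intro t
    obtain ⟨y, hy, hfy⟩ := hper.exists_mem_Ico₀ hT t
    rw [hfy]
    exact hmax (Set.mem_Icc_of_Ico hy)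
  refine ⟨t0, hglob, IsLocalMax.deriv_eq_zero ?_⟩
  exact Filter.Eventually.of_forall hglob

theorem aux_min_pt (f : ℝ → ℝ) (T : ℝ) (hT : 0 < T) (hf : ContDiff ℝ 1 f)
    (hper : Function.Periodic f T) : ∃ t0, (∀ t, f t0 ≤ f t) ∧ deriv f t0 = 0 := by
  obtain ⟨t0, hglob, hd⟩ := aux_max_pt (fun t => -f t) T hT hf.neg (fun t => by simp [hper t])
  refine ⟨t0, fun t => by have := hglob t; simpa using this, ?_⟩
  have : deriv (fun t => -f t) t0 = -deriv f t0 := deriv.neg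
  rw [this] at hd
  linarith

theorem stmt_13 (n : ℕ) (hn : 1 ≤ n) (T lam : ℝ) (hT : 0 < T)
    (hlam : 0 < lam) (hlam1 : lam < 1)
    (τ ε : ℕ → ℝ) (hτ : ∀ i, 0 ≤ τ i) (hε : ∀ i, 0 ≤ ε i)
    (b : ℕ → ℝ → ℝ) (F H : ℝ → ℝ → ℝ) (G : ℕ → ℝ → ℝ → ℝ → ℝ)
    (m M : ℕ → ℝ) (u : ℝ → ℕ → ℝ)
    (hb0 : ∀ i ≤ n, b i 0 = 0)
    (hbmono : ∀ i ≤ n, StrictMonoOn (b i) (Set.Ici 0))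
    (hFcont : Continuous fun p : ℝ × ℝ => F p.1 p.2)
    (hHcont : Continuous fun p : ℝ × ℝ => H p.1 p.2)
    (hGcont : ∀ j, 1 ≤ j → j ≤ n - 1 → Continuous fun p : ℝ × ℝ × ℝ => G j p.1 p.2.1 p.2.2)
    (hFper : ∀ t y, F (t + T) y = F t y)
    (hHper : ∀ t y, H (t + T) y = H t y)
    (hGper : ∀ j t x y, G j (t + T) x y = G j t x y)
    (hFmono : ∀ t, AntitoneOn (F t) (Set.Ici 0))
    (hFpos : ∀ t y, 0 ≤ y → 0 < F t y)
    (hHmono : ∀ t, MonotoneOn (H t) (Set.Ici 0))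
    (hHnonneg : ∀ t y, 0 ≤ y → 0 ≤ H t y)
    (hHpos : ∀ t y, 0 < y → 0 < H t y)
    (hGmono2 : ∀ j t y, MonotoneOn (fun x => G j t x y) (Set.Ici 0))
    (hGmono3 : ∀ j t x, AntitoneOn (fun y => G j t x y) (Set.Ici 0))
    (hGnonneg : ∀ j t x y, 0 ≤ x → 0 ≤ y → 0 ≤ G j t x y)
    (hGpos : ∀ j t x y, 0 < x → 0 ≤ y → 0 < G j t x y)
    -- the a priori constants
    (hmMpos : ∀ i ≤ n, 0 < m i ∧ m i < M i)
    (hM0 : ∀ t, F t 0 < b 0 (M 0))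
    (hMj : ∀ j, 1 ≤ j → j ≤ n - 1 → ∀ t, G j t (M (j - 1)) 0 < b j (M j))
    (hMn : ∀ t, H t (M (n - 1)) < b n (M n))
    (hm0 : ∀ t, b 0 (m 0) < F t (M n))
    (hmj : ∀ j, 1 ≤ j → j ≤ n - 1 → ∀ t, b j (m j) < G j t (m (j - 1)) (M n))
    (hmn : ∀ t, b n (m n) < H t (m (n - 1)))
    -- the solution u of u' = λ N(u)
    (huC1 : ∀ i ≤ n, ContDiff ℝ 1 fun t => u t i)
    (huper : ∀ t i, u (t + T) i = u t i)
    (hunonneg : ∀ t, ∀ i ≤ n, 0 ≤ u t i)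
    (hode0 : ∀ t, deriv (fun s => u s 0) t =
      lam * (F t (u (t - τ 0) n) - b 0 (u t 0)))
    (hodej : ∀ j, 1 ≤ j → j ≤ n - 1 → ∀ t, deriv (fun s => u s j) t =
      lam * (G j t (u (t - ε j) (j - 1)) (u (t - τ j) n) - b j (u t j)))
    (hoden : ∀ t, deriv (fun s => u s n) t =
      lam * (H t (u (t - ε n) (n - 1)) - b n (u t n))) :
    ∀ t, ∀ i ≤ n, m i < u t i ∧ u t i < M i := by
  have hper : ∀ i, Function.Periodic (fun t => u t i) T := fun i t => huper t i
  have hmax : ∀ i, i ≤ n → ∃ t0, (∀ t, u t i ≤ u t0 i) ∧ deriv (fun s => u s i) t0 = 0 :=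
    fun i hi => aux_max_pt _ T hT (huC1 i hi) (hper i)
  have hmin : ∀ i, i ≤ n → ∃ t0, (∀ t, u t0 i ≤ u t i) ∧ deriv (fun s => u s i) t0 = 0 :=
    fun i hi => aux_min_pt _ T hT (huC1 i hi) (hper i)
  have mpos : ∀ i ≤ n, 0 < m i := fun i hi => (hmMpos i hi).1
  have Mpos : ∀ i ≤ n, 0 < M i := fun i hi => (hmMpos i hi).1.trans (hmMpos i hi).2
  -- extract the balance equation at a critical point
  have hbal : ∀ lamv A B : ℝ, 0 < lamv → (0 : ℝ) = lamv * (A - B) → B = A := by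
    intro lamv A B h0 heq
    rcases mul_eq_zero.mp heq.symm with h | h
    · exact absurd h (ne_of_gt h0)
    · linarith
  -- reflecting strict monotonicity of b i
  have hrefl : ∀ i ≤ n, ∀ x y : ℝ, 0 ≤ x → 0 ≤ y → b i x < b i y → x < y := by
    intro i hi x y hx hy hxy
    exact ((hbmono i hi).lt_iff_lt hx hy).mp hxy
  -- Upper bounds
  have upper : ∀ i, i ≤ n → ∀ t, u t i < M i := by
    intro i
    induction i with
    | zero =>
      intro h0 t
      obtain ⟨t0, hmx, hd⟩ := hmax 0 (Nat.zero_le n)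
      have heq : b 0 (u t0 0) = F t0 (u (t0 - τ 0) n) := by
        have h := hode0 t0; rw [hd] at h
        exact hbal lam _ _ hlam h
      have h1 : F t0 (u (t0 - τ 0) n) ≤ F t0 0 :=
        hFmono t0 Set.self_mem_Ici (hunonneg _ n le_rfl) (hunonneg _ n le_rfl)
      have h2 : b 0 (u t0 0) < b 0 (M 0) := by
        rw [heq]; exact lt_of_le_of_lt h1 (hM0 t0)
      have h3 : u t0 0 < M 0 :=
        hrefl 0 (Nat.zero_le n) _ _ (hunonneg t0 0 (Nat.zero_le n)) (Mpos 0 (Nat.zero_le n)).le h2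
      exact lt_of_le_of_lt (hmx t) h3
    | succ i ih =>
      intro hi t
      have hin : i ≤ n := le_of_lt (Nat.lt_of_succ_le hi)
      have ihM : ∀ s, u s i < M i := ih hin
      obtain ⟨t0, hmx, hd⟩ := hmax (i + 1) hi
      by_cases hcase : i + 1 = n
      · subst hcase
        have heq : b (i + 1) (u t0 (i + 1)) = H t0 (u (t0 - ε (i + 1)) i) := by
          have h := hoden t0; rw [hd] at h
          simpa using hbal lam _ _ hlam h
        have h1 : H t0 (u (t0 - ε (i + 1)) i) ≤ H t0 (M i) :=
          hHmono t0 (hunonneg _ i hin) (Mpos i hin).le (ihM _).le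
        have h2 : b (i + 1) (u t0 (i + 1)) < b (i + 1) (M (i + 1)) := by
          rw [heq]
          refine lt_of_le_of_lt h1 ?_
          simpa using hMn t0
        exact lt_of_le_of_lt (hmx t)
          (hrefl (i + 1) le_rfl _ _ (hunonneg t0 (i + 1) le_rfl) (Mpos (i + 1) le_rfl).le h2)
      · have hjn : i + 1 ≤ n - 1 := by omega
        have hj1 : 1 ≤ i + 1 := Nat.le_add_left 1 i
        have heq : b (i + 1) (u t0 (i + 1)) =
            G (i + 1) t0 (u (t0 - ε (i + 1)) i) (u (t0 - τ (i + 1)) n) := by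
          have h := hodej (i + 1) hj1 hjn t0; rw [hd] at h
          simpa using hbal lam _ _ hlam h
        have h1 : G (i + 1) t0 (u (t0 - ε (i + 1)) i) (u (t0 - τ (i + 1)) n) ≤
            G (i + 1) t0 (u (t0 - ε (i + 1)) i) 0 :=
          hGmono3 (i + 1) t0 _ Set.self_mem_Ici (hunonneg _ n le_rfl) (hunonneg _ n le_rfl)
        have h2 : G (i + 1) t0 (u (t0 - ε (i + 1)) i) 0 ≤ G (i + 1) t0 (M i) 0 :=
          hGmono2 (i + 1) t0 0 (hunonneg _ i hin) (Mpos i hin).le (ihM _).le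
        have h3 : b (i + 1) (u t0 (i + 1)) < b (i + 1) (M (i + 1)) := by
          rw [heq]
          refine lt_of_le_of_lt (h1.trans h2) ?_
          simpa using hMj (i + 1) hj1 hjn t0
        exact lt_of_le_of_lt (hmx t)
          (hrefl (i + 1) hi _ _ (hunonneg t0 (i + 1) hi) (Mpos (i + 1) hi).le h3)
  -- Lower bounds
  have lower : ∀ i, i ≤ n → ∀ t, m i < u t i := by
    intro i
    induction i with
    | zero =>
      intro h0 t
      obtain ⟨t0, hmn', hd⟩ := hmin 0 (Nat.zero_le n)
      have heq : b 0 (u t0 0) = F t0 (u (t0 - τ 0) n) := by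
        have h := hode0 t0; rw [hd] at h
        exact hbal lam _ _ hlam h
      have h1 : F t0 (M n) ≤ F t0 (u (t0 - τ 0) n) :=
        hFmono t0 (hunonneg _ n le_rfl) (Mpos n le_rfl).le (upper n le_rfl _).le
      have h2 : b 0 (m 0) < b 0 (u t0 0) := by
        rw [heq]; exact lt_of_lt_of_le (hm0 t0) h1
      have h3 : m 0 < u t0 0 :=
        hrefl 0 (Nat.zero_le n) _ _ (mpos 0 (Nat.zero_le n)).le (hunonneg t0 0 (Nat.zero_le n)) h2
      exact lt_of_lt_of_le h3 (hmn' t)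
    | succ i ih =>
      intro hi t
      have hin : i ≤ n := le_of_lt (Nat.lt_of_succ_le hi)
      have ihm : ∀ s, m i < u s i := ih hin
      obtain ⟨t0, hmn', hd⟩ := hmin (i + 1) hi
      by_cases hcase : i + 1 = n
      · subst hcase
        have heq : b (i + 1) (u t0 (i + 1)) = H t0 (u (t0 - ε (i + 1)) i) := by
          have h := hoden t0; rw [hd] at h
          simpa using hbal lam _ _ hlam h
        have h1 : H t0 (m i) ≤ H t0 (u (t0 - ε (i + 1)) i) :=
          hHmono t0 (mpos i hin).le (hunonneg _ i hin) (ihm _).le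
        have h2 : b (i + 1) (m (i + 1)) < b (i + 1) (u t0 (i + 1)) := by
          rw [heq]
          refine lt_of_lt_of_le ?_ h1
          simpa using hmn t0
        exact lt_of_lt_of_le
          (hrefl (i + 1) le_rfl _ _ (mpos (i + 1) le_rfl).le (hunonneg t0 (i + 1) le_rfl) h2)
          (hmn' t)
      · have hjn : i + 1 ≤ n - 1 := by omega
        have hj1 : 1 ≤ i + 1 := Nat.le_add_left 1 i
        have heq : b (i + 1) (u t0 (i + 1)) =
            G (i + 1) t0 (u (t0 - ε (i + 1)) i) (u (t0 - τ (i + 1)) n) := by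
          have h := hodej (i + 1) hj1 hjn t0; rw [hd] at h
          simpa using hbal lam _ _ hlam h
        have h1 : G (i + 1) t0 (u (t0 - ε (i + 1)) i) (M n) ≤
            G (i + 1) t0 (u (t0 - ε (i + 1)) i) (u (t0 - τ (i + 1)) n) :=
          hGmono3 (i + 1) t0 _ (hunonneg _ n le_rfl) (Mpos n le_rfl).le (upper n le_rfl _).le
        have h2 : G (i + 1) t0 (m i) (M n) ≤ G (i + 1) t0 (u (t0 - ε (i + 1)) i) (M n) :=
          hGmono2 (i + 1) t0 (M n) (mpos i hin).le (hunonneg _ i hin) (ihm _).le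
        have h3 : b (i + 1) (m (i + 1)) < b (i + 1) (u t0 (i + 1)) := by
          rw [heq]
          refine lt_of_lt_of_le (lt_of_lt_of_le ?_ h2) h1
          simpa using hmj (i + 1) hj1 hjn t0
        exact lt_of_lt_of_le
          (hrefl (i + 1) hi _ _ (mpos (i + 1) hi).le (hunonneg t0 (i + 1) hi) h3)
          (hmn' t)
  exact fun t i hi => ⟨lower i hi t, upper i hi t⟩
end
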